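/- Let p ∈ [0,1] and let T be the set of 4-tuples of Pauli labels with an even number of components in {X, Y} and an even number of components in {Y, Z}. Then the sum over T of the depolarizing weights equals Σ_{i=0}^{4} W_i (p/3)^i (1−p)^{4−i} with (W₀,…,W₄) = (1, 0, 18, 24, 21), which equals 1 − 4p + 8p² − 64p³/9 + 64p⁴/27; consequently the yield of the two-logical-qubit error-detection scheme, Y = (1/2)·P(T), equals (1/2)(1 − 4p + 8p² − 64p³/9 + 64p⁴/27). -/

import Mathlib

/-- Pauli labels `{I, X, Y, Z}`. -/
inductive Pauli | I | X | Y | Z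
deriving DecidableEq, Repr

instance : Fintype Pauli :=
  ⟨{.I, .X, .Y, .Z}, by intro x; cases x <;> decide⟩

/-- The depolarizing weight of a Pauli label: `1 - p` for `I` and `p/3` for `X`, `Y`, `Z`. -/
noncomputable def w (p : ℝ) : Pauli → ℝ
  | .I => 1 - p
  | _ => p / 3

/-- The depolarizing weight of a 4-tuple: the product of the weights of its components. -/
noncomputable def w4 (p : ℝ) (t : Pauli × Pauli × Pauli × Pauli) : ℝ :=
  w p t.1 * w p t.2.1 * w p t.2.2.1 * w p t.2.2.2

/-- The components of a 4-tuple of Pauli labels, as a list. -/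
def comps (t : Pauli × Pauli × Pauli × Pauli) : List Pauli :=
  [t.1, t.2.1, t.2.2.1, t.2.2.2]

/-- The number of X-type components (labels in `{X, Y}`) of a 4-tuple. -/
def xCount (t : Pauli × Pauli × Pauli × Pauli) : ℕ :=
  (comps t).countP (fun P => P = Pauli.X || P = Pauli.Y)

/-- The number of Z-type components (labels in `{Y, Z}`) of a 4-tuple. -/
def zCount (t : Pauli × Pauli × Pauli × Pauli) : ℕ :=
  (comps t).countP (fun P => P = Pauli.Y || P = Pauli.Z)

/-- The set `T` of 4-tuple error patterns producing the all-zero syndrome in the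
two-logical-qubit error-detection scheme using two noisy EPR pairs. -/
def T : Finset (Pauli × Pauli × Pauli × Pauli) :=
  Finset.univ.filter (fun t => Even (xCount t) ∧ Even (zCount t))

/-- The Pauli weight enumerator `(W₀, W₁, W₂, W₃, W₄) = (1, 0, 18, 24, 21)`. -/
def W : Fin 5 → ℝ := ![1, 0, 18, 24, 21]

/-! The indicator of `T` is a quarter of `(1 + (-1)^xCount) (1 + (-1)^zCount)`, and each of these
signs is a product of single-site characters. Summing a product weight against a product character
factorises into a fourth power of a single-site sum, so `4 P(T)` is the sum of four such powers: the
trivial character contributes `1`, and each of the three non-trivial ones `(1 - 4p/3)^4`. -/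

theorem Pauli.sum_univ {M : Type*} [AddCommMonoid M] (f : Pauli → M) :
    ∑ P, f P = f .I + f .X + f .Y + f .Z := by
  rw [show (Finset.univ : Finset Pauli) = {.I, .X, .Y, .Z} from rfl,
    Finset.sum_insert (by decide), Finset.sum_insert (by decide), Finset.sum_insert (by decide),
    Finset.sum_singleton, add_assoc, add_assoc]

theorem sum_prod_four_eq_pow {α R : Type*} [Fintype α] [CommSemiring R] (f : α → R) :
    ∑ t : α × α × α × α, f t.1 * f t.2.1 * f t.2.2.1 * f t.2.2.2 = (∑ a, f a) ^ 4 := by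
  simp only [Fintype.sum_prod_type, ← Finset.sum_mul, ← Finset.mul_sum]
  ring

theorem neg_one_pow_countP {α R : Type*} [Monoid R] [HasDistribNeg R] (q : α → Bool)
    (l : List α) : (-1 : R) ^ l.countP q = (l.map fun a => if q a then -1 else 1).prod := by
  induction l with
  | nil => simp
  | cons a l ih =>
    rw [List.countP_cons, pow_add, ih, List.map_cons, List.prod_cons]
    split <;> simp

theorem two_mul_ite_even {R : Type*} [Ring R] (n : ℕ) :
    2 * (if Even n then 1 else 0 : R) = 1 + (-1) ^ n := by
  rcases Nat.even_or_odd n with h | h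
  · rw [if_pos h, h.neg_one_pow]; norm_num
  · rw [if_neg (Nat.not_even_iff_odd.2 h), h.neg_one_pow]; simp

section Characters

variable {R : Type*} [CommRing R]

def xSign : Pauli → R
  | .X | .Y => -1
  | _ => 1

def zSign : Pauli → R
  | .Y | .Z => -1
  | _ => 1

theorem neg_one_pow_xCount (t : Pauli × Pauli × Pauli × Pauli) :
    (-1 : R) ^ xCount t = xSign t.1 * xSign t.2.1 * xSign t.2.2.1 * xSign t.2.2.2 := by
  have hsign : (fun P => if (P = Pauli.X || P = Pauli.Y) then -1 else 1) = (xSign : Pauli → R) := by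
    funext P; cases P <;> rfl
  rw [xCount, neg_one_pow_countP, hsign]
  simp [comps, mul_assoc]

theorem neg_one_pow_zCount (t : Pauli × Pauli × Pauli × Pauli) :
    (-1 : R) ^ zCount t = zSign t.1 * zSign t.2.1 * zSign t.2.2.1 * zSign t.2.2.2 := by
  have hsign : (fun P => if (P = Pauli.Y || P = Pauli.Z) then -1 else 1) = (zSign : Pauli → R) := by
    funext P; cases P <;> rfl
  rw [zCount, neg_one_pow_countP, hsign]
  simp [comps, mul_assoc]

theorem four_mul_ite_mem_T (t : Pauli × Pauli × Pauli × Pauli) :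
    4 * (if t ∈ T then 1 else 0 : R) = (1 + (-1) ^ xCount t) * (1 + (-1) ^ zCount t) := by
  rw [← two_mul_ite_even, ← two_mul_ite_even]
  simp only [T, Finset.mem_filter, Finset.mem_univ, true_and, ite_and]
  split_ifs <;> ring

theorem four_mul_sum_T (f : Pauli → R) :
    4 * ∑ t ∈ T, f t.1 * f t.2.1 * f t.2.2.1 * f t.2.2.2
      = (∑ P, f P) ^ 4 + (∑ P, f P * xSign P) ^ 4 + (∑ P, f P * zSign P) ^ 4
        + (∑ P, f P * (xSign P * zSign P)) ^ 4 := by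
  calc 4 * ∑ t ∈ T, f t.1 * f t.2.1 * f t.2.2.1 * f t.2.2.2
      = ∑ t, f t.1 * f t.2.1 * f t.2.2.1 * f t.2.2.2 * (4 * if t ∈ T then 1 else 0) := by
        rw [← Finset.sum_ite_mem_eq, Finset.mul_sum]
        refine Finset.sum_congr rfl fun t _ => ?_
        split_ifs <;> ring
    _ = _ := by
        simp only [four_mul_ite_mem_T, neg_one_pow_xCount, neg_one_pow_zCount,
          ← sum_prod_four_eq_pow, ← Finset.sum_add_distrib]
        exact Finset.sum_congr rfl fun t _ => by ring

end Characters

section Depolarizing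

variable (p : ℝ)

theorem sum_w : ∑ P, w p P = 1 := by
  simp only [Pauli.sum_univ, w]; ring

theorem sum_w_mul_xSign : ∑ P, w p P * xSign P = 1 - 4 * p / 3 := by
  simp only [Pauli.sum_univ, w, xSign]; ring

theorem sum_w_mul_zSign : ∑ P, w p P * zSign P = 1 - 4 * p / 3 := by
  simp only [Pauli.sum_univ, w, zSign]; ring

theorem sum_w_mul_xSign_mul_zSign : ∑ P, w p P * (xSign P * zSign P) = 1 - 4 * p / 3 := by
  simp only [Pauli.sum_univ, w, xSign, zSign]; ring

theorem sum_T_w4 : ∑ t ∈ T, w4 p t = (1 + 3 * (1 - 4 * p / 3) ^ 4) / 4 := by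
  have h := four_mul_sum_T (w p)
  rw [sum_w, sum_w_mul_xSign, sum_w_mul_zSign, sum_w_mul_xSign_mul_zSign] at h
  simp only [w4]
  linear_combination h / 4

end Depolarizing

theorem stmt10_general (p : ℝ) :
    (∑ t ∈ T, w4 p t) = ∑ i : Fin 5, W i * (p/3)^(i : ℕ) * (1 - p)^(4 - (i : ℕ)) ∧
    (∑ t ∈ T, w4 p t) = 1 - 4*p + 8*p^2 - 64*p^3/9 + 64*p^4/27 ∧
    (1/2 : ℝ) * (∑ t ∈ T, w4 p t)
      = (1/2) * (1 - 4*p + 8*p^2 - 64*p^3/9 + 64*p^4/27) := by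
  have hT : ∑ t ∈ T, w4 p t = 1 - 4*p + 8*p^2 - 64*p^3/9 + 64*p^4/27 := by
    rw [sum_T_w4]; ring
  refine ⟨?_, hT, by rw [hT]⟩
  rw [hT, Fin.sum_univ_five]
  change _ = 1 * (p/3)^0 * (1-p)^4 + 0 * (p/3)^1 * (1-p)^3 + 18 * (p/3)^2 * (1-p)^2
    + 24 * (p/3)^3 * (1-p)^1 + 21 * (p/3)^4 * (1-p)^0
  ring

theorem stmt10 (p : ℝ) (hp : p ∈ Set.Icc (0 : ℝ) 1) :
    (∑ t ∈ T, w4 p t) = ∑ i : Fin 5, W i * (p/3)^(i : ℕ) * (1 - p)^(4 - (i : ℕ)) ∧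
    (∑ t ∈ T, w4 p t) = 1 - 4*p + 8*p^2 - 64*p^3/9 + 64*p^4/27 ∧
    (1/2 : ℝ) * (∑ t ∈ T, w4 p t)
      = (1/2) * (1 - 4*p + 8*p^2 - 64*p^3/9 + 64*p^4/27) :=
  stmt10_general p
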